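/- arXiv:2209.08793 — 2 statements merged into one kernel-verified Lean document; each statement's English description precedes it below -/
import Mathlib

section
/- Let K be a compact metric space, let Λ_n be a sequence of subsets of K that Painlevé–Kuratowski converges to a nonempty set Λ ⊆ K, and let g_n : K → ℝ be a sequence of bounded functions converging uniformly on K to a continuous function g : K → ℝ. Then sup_{x∈Λ_n} g_n(x) → sup_{x∈Λ} g(x). -/
open Filter Topology Set Metric
open scoped ENNReal

/-- The Painlevé–Kuratowski limsup of a sequence of sets:
points whose distance to `A n` has liminf zero. -/
def pkLimsup {H : Type*} [PseudoEMetricSpace H] (A : ℕ → Set H) : Set H :=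
  {h | Filter.atTop.liminf (fun n => EMetric.infEdist h (A n)) = 0}

/-- The Painlevé–Kuratowski liminf of a sequence of sets:
points whose distance to `A n` tends to zero. -/
def pkLiminf {H : Type*} [PseudoEMetricSpace H] (A : ℕ → Set H) : Set H :=
  {h | Tendsto (fun n => EMetric.infEdist h (A n)) atTop (𝓝 0)}

/-- Painlevé–Kuratowski convergence: limsup and liminf both equal the limit set. -/
def PKTendsto {H : Type*} [PseudoEMetricSpace H] (A : ℕ → Set H) (L : Set H) : Prop :=
  pkLimsup A = L ∧ pkLiminf A = L

/-- If the PK-limsup of `Λn` is `Λ`, then eventually `Λn n` is contained in any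
`δ`-thickening of `Λ`. -/
lemma eventually_subset_thickening_of_pkLimsup {K : Type*} [MetricSpace K] [CompactSpace K]
    (Λn : ℕ → Set K) (Λ : Set K) (h : pkLimsup Λn = Λ) {δ : ℝ} (hδ : 0 < δ) :
    ∀ᶠ n in atTop, Λn n ⊆ Metric.thickening δ Λ := by
  have hCcomp : IsCompact ((Metric.thickening δ Λ)ᶜ) :=
    (Metric.isOpen_thickening.isClosed_compl).isCompact
  have key : ∀ x ∈ (Metric.thickening δ Λ)ᶜ,
      ∃ r : ℝ≥0∞, 0 < r ∧ ∀ᶠ n in atTop, ∀ z ∈ EMetric.ball x r, z ∉ Λn n := by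
    intro x hx
    have hxΛ : x ∉ Λ := fun hmem => hx (Metric.self_subset_thickening hδ Λ hmem)
    have h0 : 0 < atTop.liminf (fun n => EMetric.infEdist x (Λn n)) := by
      rw [pos_iff_ne_zero]
      intro h0
      exact hxΛ (h ▸ h0)
    obtain ⟨c, hc0, hclt⟩ := exists_between h0
    refine ⟨c, hc0, ?_⟩
    filter_upwards [Filter.eventually_lt_of_lt_liminf hclt] with n hn z hz hzΛ
    have h1 : EMetric.infEdist x (Λn n) ≤ edist x z := EMetric.infEdist_le_edist_of_mem hzΛ
    have h2 : edist x z < c := by rw [edist_comm]; exact hz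
    exact absurd hn (not_lt.2 (h1.trans h2.le))
  choose! r hr0 hrev using key
  obtain ⟨t, htC, htcover⟩ := hCcomp.elim_nhds_subcover (fun x => EMetric.ball x (r x))
    (fun x hx => EMetric.ball_mem_nhds x (hr0 x hx))
  have hev : ∀ᶠ n in atTop, ∀ x ∈ t, ∀ z ∈ EMetric.ball x (r x), z ∉ Λn n :=
    (Filter.eventually_all_finset t).2 fun x hx => hrev x (htC x hx)
  filter_upwards [hev] with n hn z hzΛ
  by_contra hz
  obtain ⟨x, hxt, hxball⟩ := Set.mem_iUnion₂.1 (htcover hz)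
  exact hn x hxt z hxball hzΛ

/-- Let `K` be a compact metric space, `Λ_n → Λ` PK-converging with `Λ` nonempty, and
`g_n` bounded functions converging uniformly to a continuous `g`. Then
`sup_{x ∈ Λ_n} g_n(x) → sup_{x ∈ Λ} g(x)`. -/
theorem tendsto_sSup_image_of_pkTendsto {K : Type*} [MetricSpace K] [CompactSpace K]
    (Λn : ℕ → Set K) (Λ : Set K) (hPK : PKTendsto Λn Λ) (hΛ : Λ.Nonempty)
    (gn : ℕ → K → ℝ) (g : K → ℝ)
    (hb : ∀ n, ∃ C : ℝ, ∀ x, |gn n x| ≤ C)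
    (hg : Continuous g)
    (hu : TendstoUniformly gn g atTop) :
    Tendsto (fun n => sSup (gn n '' Λn n)) atTop (𝓝 (sSup (g '' Λ))) := by
  obtain ⟨y0, hy0Λ⟩ := hΛ
  -- g bounded above
  obtain ⟨M, hM⟩ : ∃ M, ∀ x : K, g x ≤ M := by
    obtain ⟨M, hM⟩ := isCompact_univ.bddAbove_image hg.continuousOn
    exact ⟨M, fun x => hM ⟨x, Set.mem_univ x, rfl⟩⟩
  have hbddΛ : BddAbove (g '' Λ) := ⟨M, by rintro v ⟨x, -, rfl⟩; exact hM x⟩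
  set S := sSup (g '' Λ) with hS
  have hgS : ∀ z ∈ Λ, g z ≤ S := fun z hz => le_csSup hbddΛ ⟨z, hz, rfl⟩
  -- uniform continuity of g
  have hgu : UniformContinuous g := CompactSpace.uniformContinuous_of_continuous hg
  rw [Metric.tendsto_nhds]
  intro ε hε
  obtain ⟨δ, hδ0, hδ⟩ := Metric.uniformContinuous_iff.1 hgu (ε / 4) (by linarith)
  -- choose near-optimal point in Λ
  obtain ⟨v, ⟨z0, hz0Λ, rfl⟩, hz0⟩ := exists_lt_of_lt_csSup (⟨g y0, ⟨y0, hy0Λ, rfl⟩⟩ : (g '' Λ).Nonempty)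
    (show S - ε / 4 < S by linarith)
  -- events
  have hliminf_z0 : Tendsto (fun n => EMetric.infEdist z0 (Λn n)) atTop (𝓝 0) := by
    have : z0 ∈ pkLiminf Λn := hPK.2.symm ▸ hz0Λ
    exact this
  have E1 : ∀ᶠ n in atTop, ∃ x ∈ Λn n, dist z0 x < δ := by
    filter_upwards [hliminf_z0.eventually_lt_const
      (show (0 : ℝ≥0∞) < ENNReal.ofReal δ by simpa using hδ0)] with n hn
    obtain ⟨x, hxΛ, hx⟩ := EMetric.infEdist_lt_iff.1 hn
    exact ⟨x, hxΛ, by rwa [← edist_lt_ofReal]⟩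
  have E2 : ∀ᶠ n in atTop, ∀ x, dist (g x) (gn n x) < ε / 4 :=
    Metric.tendstoUniformly_iff.1 hu (ε / 4) (by linarith)
  have E3 := eventually_subset_thickening_of_pkLimsup Λn Λ hPK.1 hδ0
  filter_upwards [E1, E2, E3] with n h1 h2 h3
  obtain ⟨x0, hx0Λ, hx0d⟩ := h1
  -- bounds on gn n over Λn n
  obtain ⟨C, hC⟩ := hb n
  have hbddn : BddAbove (gn n '' Λn n) := ⟨C, by rintro v ⟨x, -, rfl⟩; exact (abs_le.1 (hC x)).2⟩
  have hne : (gn n '' Λn n).Nonempty := ⟨gn n x0, x0, hx0Λ, rfl⟩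
  -- upper bound: sSup (gn n '' Λn n) ≤ S + ε/2
  have hupper : sSup (gn n '' Λn n) ≤ S + ε / 2 := by
    refine csSup_le hne ?_
    rintro v ⟨x, hxΛ, rfl⟩
    obtain ⟨z, hzΛ, hzd⟩ := Metric.mem_thickening_iff.1 (h3 hxΛ)
    have h4 : dist (g x) (g z) < ε / 4 := hδ hzd
    have h5 : dist (g x) (gn n x) < ε / 4 := h2 x
    have h6 : g z ≤ S := hgS z hzΛ
    rw [Real.dist_eq] at h4 h5
    have h7 := abs_sub_lt_iff.1 h4
    have h8 := abs_sub_lt_iff.1 h5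
    linarith [h7.1, h8.2]
  -- lower bound
  have hlower : S - 3 * ε / 4 < sSup (gn n '' Λn n) := by
    have h4 : dist (g z0) (g x0) < ε / 4 := hδ hx0d
    have h5 : dist (g x0) (gn n x0) < ε / 4 := h2 x0
    rw [Real.dist_eq] at h4 h5
    have h7 := abs_sub_lt_iff.1 h4
    have h8 := abs_sub_lt_iff.1 h5
    have h9 : gn n x0 ≤ sSup (gn n '' Λn n) := le_csSup hbddn ⟨x0, hx0Λ, rfl⟩
    linarith [h7.1, h8.1]
  rw [Real.dist_eq, abs_sub_lt_iff]
  constructor <;> linarith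
end

section
/- Let g : ℝ^{d_θ} → ℝ^{d_g} be continuously differentiable in a neighborhood of θ_0 with derivative matrix G(θ), let Θ = {θ : g(θ) ≤ 0 componentwise}, and let θ_n ∈ Θ with θ_n → θ_0 and √n · g(θ_n) → b ∈ ℝ^{d_g}. Define Λ = {λ ∈ ℝ^{d_θ} : b + G(θ_0)λ ≤ 0}. If there exists λ̃ ∈ Λ with e_j'b + e_j'G(θ_0)λ̃ < 0 for all j ∈ {1,…,d_g}, then the sets √n(Θ − θ_n) converge in the Painlevé–Kuratowski sense to Λ. -/
open Filter Topology Set Metric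

/-!
Write `μ ∈ √n(Θ − θₙ)` as `g(θₙ + μ/√n) ≤ 0`. Since `g` is C¹, it is strictly differentiable
at `θ₀`, so `√n g(θₙ + μₙ/√n) = √n g(θₙ) + G(θ₀)μₙ + o(1) → b + G(θ₀)μ` whenever `μₙ → μ`.
Hence a point `λ` with a positive coordinate of `b + G(θ₀)λ` has a neighbourhood that the
rescaled sets eventually avoid (outer limit ⊆ Λ), while a point with `b + G(θ₀)λ < 0`
eventually lies in them. The constraint qualification makes these strict points dense in `Λ`,
so `Λ` is contained in the inner limit.
-/

section PainleveKuratowski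

variable {H : Type*} [PseudoEMetricSpace H] {A : ℕ → Set H} {L : Set H}

theorem pkLiminf_subset_pkLimsup (A : ℕ → Set H) : pkLiminf A ⊆ pkLimsup A :=
  fun _ hx => Tendsto.liminf_eq hx

theorem pkLimsup_subset_of_eventually_notMem
    (hout : ∀ x ∉ L, ∀ᶠ p in atTop ×ˢ 𝓝 x, p.2 ∉ A p.1) : pkLimsup A ⊆ L := by
  intro x hx
  by_contra hxL
  obtain ⟨N, hN, V, hV, hNV⟩ := eventually_prod_iff.1 (hout x hxL)
  obtain ⟨ε, hε, hball⟩ := EMetric.mem_nhds_iff.1 hV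
  have hfar : ∀ᶠ n in atTop, ε ≤ infEDist x (A n) := by
    filter_upwards [hN] with n hn
    refine le_infEDist.2 fun y hy => ?_
    by_contra hlt
    exact hNV hn (hball (by rwa [mem_eball, edist_comm, ← not_le])) hy
  have : ε ≤ 0 := hx ▸ le_liminf_of_le (by isBoundedDefault) hfar
  exact hε.ne' (le_antisymm this bot_le)

theorem subset_pkLiminf_of_subset_closure {D : Set H} (hLD : L ⊆ closure D)
    (hin : ∀ x ∈ D, ∀ᶠ n in atTop, x ∈ A n) : L ⊆ pkLiminf A := by
  intro x hx
  refine ENNReal.tendsto_nhds_zero.2 fun ε hε => ?_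
  obtain ⟨y, hyD, hxy⟩ := EMetric.mem_closure_iff.1 (hLD hx) ε hε
  filter_upwards [hin y hyD] with n hyn
  calc infEDist x (A n) ≤ infEDist y (A n) + edist x y := infEDist_le_infEDist_add_edist
    _ = edist x y := by rw [infEDist_zero_of_mem hyn, zero_add]
    _ ≤ ε := hxy.le

theorem pkTendsto_of_eventually {D : Set H}
    (hout : ∀ x ∉ L, ∀ᶠ p in atTop ×ˢ 𝓝 x, p.2 ∉ A p.1)
    (hLD : L ⊆ closure D) (hin : ∀ x ∈ D, ∀ᶠ n in atTop, x ∈ A n) : PKTendsto A L := by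
  have hsup := pkLimsup_subset_of_eventually_notMem hout
  have hinf := subset_pkLiminf_of_subset_closure hLD hin
  have hle := pkLiminf_subset_pkLimsup A
  exact ⟨hsup.antisymm (hinf.trans hle), (hle.trans hsup).antisymm hinf⟩

end PainleveKuratowski

section Rescaling

variable {E F : Type*} [NormedAddCommGroup E] [NormedSpace ℝ E]
  [NormedAddCommGroup F] [NormedSpace ℝ F]

theorem mem_image_smul_sub_iff {s : ℝ} (hs : s ≠ 0) {c μ : E} {S : Set E} :
    μ ∈ (fun θ => s • (θ - c)) '' S ↔ c + s⁻¹ • μ ∈ S := by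
  constructor
  · rintro ⟨θ, hθ, rfl⟩
    rwa [inv_smul_smul₀ hs, add_sub_cancel]
  · exact fun h => ⟨c + s⁻¹ • μ, h, by simp only [add_sub_cancel_left, smul_inv_smul₀ hs]⟩

theorem HasStrictFDerivAt.tendsto_smul_apply_add_inv_smul {g : E → F} {G : E →L[ℝ] F} {θ₀ : E}
    (hg : HasStrictFDerivAt g G θ₀) {ι : Type*} {l : Filter ι} {s : ι → ℝ} {θ μ : ι → E}
    {b : F} {μ₀ : E} (hs : Tendsto s l atTop) (hθ : Tendsto θ l (𝓝 θ₀))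
    (hb : Tendsto (fun i => s i • g (θ i)) l (𝓝 b)) (hμ : Tendsto μ l (𝓝 μ₀)) :
    Tendsto (fun i => s i • g (θ i + (s i)⁻¹ • μ i)) l (𝓝 (b + G μ₀)) := by
  set r : ι → F := fun i => g (θ i + (s i)⁻¹ • μ i) - g (θ i) - G ((s i)⁻¹ • μ i)
  have hx : Tendsto (fun i => θ i + (s i)⁻¹ • μ i) l (𝓝 θ₀) := by
    simpa using hθ.add ((tendsto_inv_atTop_zero.comp hs).smul hμ)
  have hr : r =o[l] fun i => (s i)⁻¹ • μ i := by
    have := hg.isLittleO.comp_tendsto (hx.prodMk_nhds hθ)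
    simp only [Function.comp_def, add_sub_cancel_left] at this
    exact this
  have hs0 : ∀ᶠ i in l, s i ≠ 0 := hs.eventually_ne_atTop 0
  have hsr : Tendsto (fun i => s i • r i) l (𝓝 0) := by
    refine (Asymptotics.isLittleO_one_iff ℝ).1 ?_
    refine (((Asymptotics.isBigO_refl s l).smul_isLittleO hr).congr' .rfl ?_).trans_isBigO
      (hμ.isBigO_one ℝ)
    filter_upwards [hs0] with i hi
    rw [smul_inv_smul₀ hi]
  have hsplit : ∀ᶠ i in l,
      s i • g (θ i) + G (μ i) + s i • r i = s i • g (θ i + (s i)⁻¹ • μ i) := by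
    filter_upwards [hs0] with i hi
    simp only [r, smul_sub, map_smul, smul_inv_smul₀ hi]
    abel
  simpa using ((hb.add ((G.continuous.tendsto μ₀).comp hμ)).add hsr).congr' hsplit

end Rescaling

theorem subset_closure_setOf_forall_lt {E ι : Type*} [AddCommGroup E] [Module ℝ E]
    [TopologicalSpace E] [ContinuousAdd E] [ContinuousSMul ℝ E]
    (G : E →ₗ[ℝ] ι → ℝ) (b : ι → ℝ) {lam : E} (hlam : ∀ j, b j + G lam j < 0) :
    {x | ∀ j, b j + G x j ≤ 0} ⊆ closure {x | ∀ j, b j + G x j < 0} := by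
  intro x hx
  have hpath : Tendsto (fun t : ℝ => x + t • (lam - x)) (𝓝[>] 0) (𝓝 x) := by
    have : Continuous fun t : ℝ => x + t • (lam - x) := by fun_prop
    simpa using (this.tendsto 0).mono_left nhdsWithin_le_nhds
  refine mem_closure_of_tendsto hpath ?_
  filter_upwards [Ioc_mem_nhdsGT zero_lt_one] with t ⟨ht0, ht1⟩ j
  have hconv : b j + G (x + t • (lam - x)) j
      = (1 - t) * (b j + G x j) + t * (b j + G lam j) := by
    simp only [map_add, map_smul, map_sub, Pi.add_apply, Pi.smul_apply, Pi.sub_apply, smul_eq_mul]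
    ring
  rw [hconv]
  nlinarith [hx j, hlam j]

theorem pk_boundary_inequalities_general {dθ dg : ℕ}
    (g : (Fin dθ → ℝ) → (Fin dg → ℝ)) (θ₀ : Fin dθ → ℝ)
    (U : Set (Fin dθ → ℝ)) (hU : IsOpen U) (hθ₀U : θ₀ ∈ U)
    (G : (Fin dθ → ℝ) → ((Fin dθ → ℝ) →L[ℝ] (Fin dg → ℝ)))
    (hderiv : ∀ θ ∈ U, HasFDerivAt g (G θ) θ)
    (hGcont : ContinuousOn G U)
    (θn : ℕ → (Fin dθ → ℝ))
    (hθn : Tendsto θn atTop (𝓝 θ₀))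
    (b : Fin dg → ℝ)
    (hb : Tendsto (fun n : ℕ => fun j => Real.sqrt n * g (θn n) j) atTop (𝓝 b))
    (hCQ : ∃ lam : Fin dθ → ℝ, (∀ j, b j + G θ₀ lam j ≤ 0) ∧ (∀ j, b j + G θ₀ lam j < 0)) :
    PKTendsto
      (fun n : ℕ =>
        (fun θ : Fin dθ → ℝ => Real.sqrt n • (θ - θn n)) '' {θ | ∀ j, g θ j ≤ 0})
      {lam : Fin dθ → ℝ | ∀ j, b j + G θ₀ lam j ≤ 0} := by
  obtain ⟨lamt, -, hlamt⟩ := hCQ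
  have hg : HasStrictFDerivAt g (G θ₀) θ₀ :=
    hasStrictFDerivAt_of_hasFDerivAt_of_continuousAt
      (eventually_of_mem (hU.mem_nhds hθ₀U) hderiv) (hGcont.continuousAt (hU.mem_nhds hθ₀U))
  have hs : Tendsto (fun n : ℕ => √(n : ℝ)) atTop atTop :=
    Real.tendsto_sqrt_atTop.comp tendsto_natCast_atTop_atTop
  set F : ℕ × (Fin dθ → ℝ) → Fin dg → ℝ := fun p =>
    √(p.1 : ℝ) • g (θn p.1 + (√(p.1 : ℝ))⁻¹ • p.2)
  have hF (x : Fin dθ → ℝ) : Tendsto F (atTop ×ˢ 𝓝 x) (𝓝 (b + G θ₀ x)) :=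
    hg.tendsto_smul_apply_add_inv_smul (hs.comp tendsto_fst) (hθn.comp tendsto_fst)
      (hb.comp tendsto_fst) tendsto_snd
  have hmem : ∀ᶠ n : ℕ in atTop, ∀ μ, μ ∈ (fun θ : Fin dθ → ℝ => Real.sqrt n • (θ - θn n)) ''
      {θ | ∀ j, g θ j ≤ 0} ↔ F (n, μ) ≤ 0 := by
    filter_upwards [hs.eventually_gt_atTop 0] with n hn μ
    rw [mem_image_smul_sub_iff hn.ne', smul_nonpos_iff_nonpos_of_pos_left hn]
    rfl
  -- In the pointwise order on `Fin dg → ℝ`, `Λ = {x | b + G θ₀ x ≤ 0}` and `Θ = {θ | g θ ≤ 0}`.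
  refine pkTendsto_of_eventually (D := {x | ∀ j, b j + G θ₀ x j < 0}) ?_
    (subset_closure_setOf_forall_lt (G θ₀).toLinearMap b hlamt) ?_
  · intro x hx
    filter_upwards [(hF x).eventually (isClosed_Iic.isOpen_compl.mem_nhds hx),
      tendsto_fst.eventually hmem] with p hp hpmem
    exact fun hpA => hp ((hpmem p.2).1 hpA)
  · intro x hx
    have hFx := (hF x).comp (tendsto_id.prodMk tendsto_const_nhds)
    filter_upwards [eventually_all.2 fun j => (tendsto_pi_nhds.1 hFx j).eventually_lt_const (hx j),
      hmem] with n hn hnmem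
    exact (hnmem x).2 fun j => (hn j).le

/-- Local PK convergence of a parameter space defined by inequalities, near the boundary.
If `g` is C¹ near `θ₀` with derivative `G`, `θ_n ∈ Θ = {g ≤ 0}`, `θ_n → θ₀`,
`√n g(θ_n) → b`, and the Mangasarian–Fromowitz constraint qualification holds, then
`√n(Θ − θ_n) → Λ = {λ : b + G(θ₀)λ ≤ 0}` in the PK sense. -/
theorem pk_boundary_inequalities {dθ dg : ℕ}
    (g : (Fin dθ → ℝ) → (Fin dg → ℝ)) (θ₀ : Fin dθ → ℝ)
    (U : Set (Fin dθ → ℝ)) (hU : IsOpen U) (hθ₀U : θ₀ ∈ U)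
    (G : (Fin dθ → ℝ) → ((Fin dθ → ℝ) →L[ℝ] (Fin dg → ℝ)))
    (hderiv : ∀ θ ∈ U, HasFDerivAt g (G θ) θ)
    (hGcont : ContinuousOn G U)
    (θn : ℕ → (Fin dθ → ℝ))
    (hθnΘ : ∀ n, θn n ∈ {θ : Fin dθ → ℝ | ∀ j, g θ j ≤ 0})
    (hθn : Tendsto θn atTop (𝓝 θ₀))
    (b : Fin dg → ℝ)
    (hb : Tendsto (fun n : ℕ => fun j => Real.sqrt n * g (θn n) j) atTop (𝓝 b))
    (hCQ : ∃ lam : Fin dθ → ℝ, (∀ j, b j + G θ₀ lam j ≤ 0) ∧ (∀ j, b j + G θ₀ lam j < 0)) :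
    PKTendsto
      (fun n : ℕ =>
        (fun θ : Fin dθ → ℝ => Real.sqrt n • (θ - θn n)) '' {θ | ∀ j, g θ j ≤ 0})
      {lam : Fin dθ → ℝ | ∀ j, b j + G θ₀ lam j ≤ 0} :=
  pk_boundary_inequalities_general g θ₀ U hU hθ₀U G hderiv hGcont θn hθn b hb hCQ
end
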